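/- Let 0 < p, q < 1, β₁ > β₂ > 0, γ₁ > γ₂ > 0. If p·β₁e^{-β₁t} + (1-p)·β₂e^{-β₂t} = q·γ₁e^{-γ₁t} + (1-q)·γ₂e^{-γ₂t} for all t ≥ 0, then p = q, β₁ = γ₁, and β₂ = γ₂. -/

import Mathlib

/-! Multiplying a two-component mixture density by `exp (r * t)` and letting `t → ∞` isolates
the component with the smaller rate: for `r = β₂` the limit is `(1 - p) * β₂ ≠ 0`, for `r < β₂`
it is `0`. Comparing these limits on both sides forces `β₂ = γ₂` and then `p = q`; evaluating
at `t = 0` gives `β₁ = γ₁`. -/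

open Filter Real Topology

noncomputable def expMixtureDensity (p a₁ a₂ t : ℝ) : ℝ :=
  p * (a₁ * exp (-a₁ * t)) + (1 - p) * (a₂ * exp (-a₂ * t))

lemma exp_mul_expMixtureDensity (p a₁ a₂ r t : ℝ) :
    exp (r * t) * expMixtureDensity p a₁ a₂ t =
      p * a₁ * exp ((r - a₁) * t) + (1 - p) * a₂ * exp ((r - a₂) * t) := by
  simp only [expMixtureDensity, sub_mul, neg_mul, exp_sub, exp_neg]
  field_simp

lemma tendsto_exp_mul_atTop_nhds_zero {a : ℝ} (ha : a < 0) :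
    Tendsto (fun t ↦ exp (a * t)) atTop (𝓝 0) :=
  tendsto_exp_comp_nhds_zero.2 (tendsto_id.const_mul_atTop_of_neg ha)

lemma tendsto_exp_mul_expMixtureDensity_self {p a₁ a₂ : ℝ} (ha : a₂ < a₁) :
    Tendsto (fun t ↦ exp (a₂ * t) * expMixtureDensity p a₁ a₂ t) atTop (𝓝 ((1 - p) * a₂)) := by
  simp only [exp_mul_expMixtureDensity, sub_self, zero_mul, exp_zero, mul_one]
  simpa using ((tendsto_exp_mul_atTop_nhds_zero (sub_neg.2 ha)).const_mul (p * a₁)).add_const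
    ((1 - p) * a₂)

lemma tendsto_exp_mul_expMixtureDensity_of_lt {p a₁ a₂ r : ℝ} (hr : r < a₂) (ha : a₂ < a₁) :
    Tendsto (fun t ↦ exp (r * t) * expMixtureDensity p a₁ a₂ t) atTop (𝓝 0) := by
  simp only [exp_mul_expMixtureDensity]
  simpa using
    ((tendsto_exp_mul_atTop_nhds_zero (sub_neg.2 (hr.trans ha))).const_mul (p * a₁)).add
      ((tendsto_exp_mul_atTop_nhds_zero (sub_neg.2 hr)).const_mul ((1 - p) * a₂))

lemma rate_le_of_expMixtureDensity_eventuallyEq {p q β₁ β₂ γ₁ γ₂ : ℝ} (hp : p < 1)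
    (hβ₂ : 0 < β₂) (hβ : β₂ < β₁) (hγ : γ₂ < γ₁)
    (h : expMixtureDensity p β₁ β₂ =ᶠ[atTop] expMixtureDensity q γ₁ γ₂) :
    γ₂ ≤ β₂ := by
  by_contra! hlt
  have hlim : Tendsto (fun t ↦ exp (β₂ * t) * expMixtureDensity p β₁ β₂ t) atTop (𝓝 0) :=
    (tendsto_exp_mul_expMixtureDensity_of_lt (p := q) hlt hγ).congr'
      (h.mono fun t ht ↦ by simp only [ht])
  have hzero : (1 - p) * β₂ = 0 :=
    tendsto_nhds_unique (tendsto_exp_mul_expMixtureDensity_self hβ) hlim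
  exact (mul_pos (sub_pos.2 hp) hβ₂).ne' hzero

lemma weight_eq_of_expMixtureDensity_eventuallyEq {p q β₁ β₂ γ₁ : ℝ} (hβ₂ : 0 < β₂)
    (hβ : β₂ < β₁) (hγ : β₂ < γ₁)
    (h : expMixtureDensity p β₁ β₂ =ᶠ[atTop] expMixtureDensity q γ₁ β₂) :
    p = q := by
  have hlim :
      Tendsto (fun t ↦ exp (β₂ * t) * expMixtureDensity p β₁ β₂ t) atTop (𝓝 ((1 - q) * β₂)) :=
    (tendsto_exp_mul_expMixtureDensity_self hγ).congr' (h.mono fun t ht ↦ by simp only [ht])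
  have heq := tendsto_nhds_unique (tendsto_exp_mul_expMixtureDensity_self hβ) hlim
  linarith [(mul_left_inj' hβ₂.ne').1 heq]

theorem exp_mixture_identifiable_general
    (p q β₁ β₂ γ₁ γ₂ : ℝ)
    (hp : 0 < p) (hp' : p < 1) (hq' : q < 1)
    (hβ₂ : 0 < β₂) (hβ : β₂ < β₁) (hγ₂ : 0 < γ₂) (hγ : γ₂ < γ₁)
    (h : ∀ t : ℝ, 0 ≤ t →
      p * (β₁ * Real.exp (-β₁ * t)) + (1 - p) * (β₂ * Real.exp (-β₂ * t))
        = q * (γ₁ * Real.exp (-γ₁ * t)) + (1 - q) * (γ₂ * Real.exp (-γ₂ * t))) :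
    p = q ∧ β₁ = γ₁ ∧ β₂ = γ₂ := by
  have hev : expMixtureDensity p β₁ β₂ =ᶠ[atTop] expMixtureDensity q γ₁ γ₂ :=
    (eventually_ge_atTop 0).mono h
  have hrate : β₂ = γ₂ :=
    le_antisymm (rate_le_of_expMixtureDensity_eventuallyEq hq' hγ₂ hγ hβ hev.symm)
      (rate_le_of_expMixtureDensity_eventuallyEq hp' hβ₂ hβ hγ hev)
  subst hrate
  have hweight : p = q := weight_eq_of_expMixtureDensity_eventuallyEq hβ₂ hβ hγ hev
  subst hweight
  have hzero := h 0 le_rfl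
  simp only [mul_zero, exp_zero, mul_one, add_left_inj] at hzero
  exact ⟨rfl, mul_left_cancel₀ hp.ne' hzero, rfl⟩

theorem exp_mixture_identifiable
    (p q β₁ β₂ γ₁ γ₂ : ℝ)
    (hp : 0 < p) (hp' : p < 1) (hq : 0 < q) (hq' : q < 1)
    (hβ₂ : 0 < β₂) (hβ : β₂ < β₁) (hγ₂ : 0 < γ₂) (hγ : γ₂ < γ₁)
    (h : ∀ t : ℝ, 0 ≤ t →
      p * (β₁ * Real.exp (-β₁ * t)) + (1 - p) * (β₂ * Real.exp (-β₂ * t))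
        = q * (γ₁ * Real.exp (-γ₁ * t)) + (1 - q) * (γ₂ * Real.exp (-γ₂ * t))) :
    p = q ∧ β₁ = γ₁ ∧ β₂ = γ₂ :=
  exp_mixture_identifiable_general p q β₁ β₂ γ₁ γ₂ hp hp' hq' hβ₂ hβ hγ₂ hγ h
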